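/- Let T: 𝕋 → 𝕋 be continuous with finite fibers, X ⊂ 𝕋 an infinite rotational proper subset with 0 ∉ X, μ a T-invariant Borel probability measure on X, and Φ(x) = μ([α,x]) for x ∈ X where α = inf X. Then there exists an irrational θ₀ ∈ (0,1) such that Φ(T(x)) ≡ Φ(x) + θ₀ (mod 1) for all x ∈ X. -/

import Mathlib

open Set Filter MeasureTheory

noncomputable def rep (z : UnitAddCircle) : ℝ := (AddCircle.equivIco 1 0 z : ℝ)

def MinimalOn (T : UnitAddCircle → UnitAddCircle) (X : Set UnitAddCircle) : Prop :=
  ∀ x ∈ X, ∀ y ∈ X, y ∈ closure {z : UnitAddCircle | ∃ n : ℕ, T^[n] x = z}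

def PreservesCyclicOrder (T : UnitAddCircle → UnitAddCircle) (X : Set UnitAddCircle) : Prop :=
  ∀ p ∈ X, ∀ q ∈ X, ∀ r ∈ X,
    T p ≠ T q → T q ≠ T r → T r ≠ T p →
    sbtw p q r → sbtw (T p) (T q) (T r)

def IsRotational (T : UnitAddCircle → UnitAddCircle) (X : Set UnitAddCircle) : Prop :=
  IsClosed X ∧ Set.MapsTo T X X ∧ MinimalOn T X ∧ PreservesCyclicOrder T X

/-!
Minimality makes `μ` atomless, so the distribution function `F t = μ {rep ≤ t}` is continuous
and `Φ = F ∘ rep`. Let `a` be the leftmost point of `X` and `b ∈ X` a preimage of `a`. Cutting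
the circle open at `b`, preservation of the cyclic order says that, off the null set
`Xᶜ ∪ T⁻¹{a} ∪ T⁻¹{T x}`, the preimage of the arc `[a, T x]` is the arc `[b, x]`; by
invariance the two arcs have the same measure, i.e. `Φ (T x) ≡ Φ x - Φ b (mod 1)`. Since `X`
lies in the support of `μ` and `T⁻¹{a}` is null, `X \ T⁻¹{a}` is dense in `X`, so by continuity
the identity holds on all of `X`, with `θ₀ = 1 - Φ b`.
If `θ₀` were rational, the orbit of a point would meet only finitely many level sets of
`Φ mod 1`, hence so would its closure `X`; but by the intermediate value theorem `Φ` maps `X`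
onto `[0, 1]`, since `F` is constant on the gaps of `X`.
-/

open ProbabilityTheory Function

section CircleCoordinates

lemma rep_mem_Ico (z : UnitAddCircle) : rep z ∈ Ico 0 1 := by
  simpa [rep] using (AddCircle.equivIco 1 0 z).2

@[simp] lemma coe_rep (z : UnitAddCircle) : ((rep z : ℝ) : UnitAddCircle) = z :=
  (AddCircle.equivIco 1 0).symm_apply_apply z

lemma rep_injective : Injective rep := LeftInverse.injective coe_rep

lemma rep_coe {r : ℝ} (hr : r ∈ Ico 0 1) : rep (r : UnitAddCircle) = r :=
  (AddCircle.coe_eq_coe_iff_of_mem_Ico (p := 1) (a := 0) (by simpa using rep_mem_Ico _)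
    (by simpa using hr)).1 (coe_rep _)

lemma measurable_rep : Measurable rep :=
  measurable_subtype_coe.comp (AddCircle.measurableEquivIco 1 0).measurable

lemma continuousAt_rep {z : UnitAddCircle} (hz : z ≠ 0) : ContinuousAt rep z :=
  continuous_subtype_val.continuousAt.comp
    (AddCircle.continuousAt_equivIco 1 0 (by simpa using hz))

variable {X : Set UnitAddCircle}

lemma continuousOn_rep (h0 : (0 : UnitAddCircle) ∉ X) : ContinuousOn rep X :=
  fun _ hx => (continuousAt_rep (ne_of_mem_of_not_mem hx h0)).continuousWithinAt

lemma setOf_coe_mem_eq_image_rep :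
    {r : ℝ | r ∈ Ico 0 1 ∧ ((r : ℝ) : UnitAddCircle) ∈ X} = rep '' X := by
  ext r
  constructor
  · rintro ⟨hr, hrX⟩
    exact ⟨_, hrX, rep_coe hr⟩
  · rintro ⟨x, hx, rfl⟩
    exact ⟨rep_mem_Ico _, (coe_rep x).symm ▸ hx⟩

lemma sbtw_coe_iff {p : ℝ} [Fact (0 < p)] {u v w : ℝ} (hv : v ∈ Ioo u (u + p))
    (hw : w ∈ Ioo u (u + p)) :
    sbtw (u : AddCircle p) (v : AddCircle p) (w : AddCircle p) ↔ v < w := by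
  rw [sbtw_iff_not_btw, btw_cyclic, QuotientAddGroup.btw_coe_iff,
    toIcoMod_eq_self _ |>.2 (Ioo_subset_Ico_self hw),
    toIocMod_eq_self _ |>.2 (Ioo_subset_Ioc_self hv), not_le]

/-- The coordinate of `z` on the circle cut open at `b`. -/
noncomputable def arcPos (b z : UnitAddCircle) : ℝ :=
  if rep b ≤ rep z then rep z else rep z + 1

@[simp] lemma coe_arcPos (b z : UnitAddCircle) : ((arcPos b z : ℝ) : UnitAddCircle) = z := by
  unfold arcPos
  split_ifs <;> simp

lemma arcPos_of_le {b z : UnitAddCircle} (h : rep b ≤ rep z) : arcPos b z = rep z := if_pos h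

lemma arcPos_mem_Ioo {b z : UnitAddCircle} (hz : z ≠ b) :
    arcPos b z ∈ Ioo (rep b) (rep b + 1) := by
  have hne : rep z ≠ rep b := rep_injective.ne hz
  obtain ⟨hb0, hb1⟩ := rep_mem_Ico b
  obtain ⟨hz0, hz1⟩ := rep_mem_Ico z
  unfold arcPos
  split_ifs with h
  · exact ⟨lt_of_le_of_ne h hne.symm, by linarith⟩
  · constructor <;> linarith [not_le.1 h]

lemma sbtw_iff_arcPos_lt {b x y : UnitAddCircle} (hx : x ≠ b) (hy : y ≠ b) :
    sbtw b x y ↔ arcPos b x < arcPos b y := by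
  conv_lhs => rw [← coe_rep b, ← coe_arcPos b x, ← coe_arcPos b y]
  exact sbtw_coe_iff (arcPos_mem_Ioo hx) (arcPos_mem_Ioo hy)

end CircleCoordinates

section CyclicOrder

variable {T : UnitAddCircle → UnitAddCircle} {X : Set UnitAddCircle} {a b : UnitAddCircle}

theorem PreservesCyclicOrder.rep_lt_rep_of_arcPos_lt (hcyc : PreservesCyclicOrder T X)
    (hmaps : MapsTo T X X) (hleft : ∀ x ∈ X, rep a ≤ rep x) (hb : b ∈ X) (hTb : T b = a)
    {s r : UnitAddCircle} (hs : s ∈ X) (hr : r ∈ X) (hsa : T s ≠ a) (hra : T r ≠ a)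
    (hsr : T s ≠ T r) (hlt : arcPos b s < arcPos b r) : rep (T s) < rep (T r) := by
  have hsb : s ≠ b := by rintro rfl; exact hsa hTb
  have hrb : r ≠ b := by rintro rfl; exact hra hTb
  have h := hcyc b hb s hs r hr (hTb ▸ hsa.symm) hsr (hTb ▸ hra)
    ((sbtw_iff_arcPos_lt hsb hrb).2 hlt)
  rwa [hTb, sbtw_iff_arcPos_lt hsa hra, arcPos_of_le (hleft _ (hmaps hs)),
    arcPos_of_le (hleft _ (hmaps hr))] at h

theorem PreservesCyclicOrder.rep_le_rep_iff_arcPos_le (hcyc : PreservesCyclicOrder T X)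
    (hmaps : MapsTo T X X) (hleft : ∀ x ∈ X, rep a ≤ rep x) (hb : b ∈ X) (hTb : T b = a)
    {s r : UnitAddCircle} (hs : s ∈ X) (hr : r ∈ X) (hsa : T s ≠ a) (hra : T r ≠ a)
    (hsr : T s ≠ T r) : rep (T s) ≤ rep (T r) ↔ arcPos b s ≤ arcPos b r := by
  have hne : arcPos b s ≠ arcPos b r := fun h => hsr (by rw [← coe_arcPos b s, h, coe_arcPos])
  constructor
  · intro h
    by_contra! hlt
    exact (hcyc.rep_lt_rep_of_arcPos_lt hmaps hleft hb hTb hr hs hra hsa hsr.symm hlt).not_ge h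
  · intro h
    exact (hcyc.rep_lt_rep_of_arcPos_lt hmaps hleft hb hTb hs hr hsa hra hsr
      (lt_of_le_of_ne h hne)).le

end CyclicOrder

section CDF

variable (ν : Measure ℝ) [IsProbabilityMeasure ν]

theorem continuous_cdf [NullSingletonClass ν] : Continuous (cdf ν) := by
  refine continuous_iff_continuousAt.2 fun t => ?_
  rw [(cdf ν).mono.continuousAt_iff_leftLim_eq_rightLim, StieltjesFunction.rightLim_eq]
  have h := (cdf ν).measure_singleton t
  rw [measure_cdf, measure_singleton, eq_comm, ENNReal.ofReal_eq_zero, sub_nonpos] at h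
  exact le_antisymm ((cdf ν).mono.leftLim_le le_rfl) h

theorem exists_mem_cdf_eq {C : Set ℝ} (hC : IsCompact C) (hν : ν Cᶜ = 0) {t : ℝ}
    (ht : (C ∩ Iic t).Nonempty) : ∃ u ∈ C, cdf ν u = cdf ν t := by
  have hK := hC.inter_right (isClosed_Iic (a := t))
  obtain ⟨huC, hut⟩ := hK.sSup_mem ht
  refine ⟨_, huC, ?_⟩
  have hgap : ν.real (Ioc (sSup (C ∩ Iic t)) t) = 0 := by
    rw [measureReal_eq_zero_iff]
    exact measure_mono_null
      (fun s hs hsC => hs.1.not_ge (le_csSup hK.bddAbove ⟨hsC, hs.2⟩)) hν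
  rw [← Iic_sdiff_Iic, measureReal_sdiff (Iic_subset_Iic.2 hut) measurableSet_Iic] at hgap
  rw [cdf_eq_real, cdf_eq_real]
  linarith

theorem Icc_subset_image_cdf [NullSingletonClass ν] {C : Set ℝ} (hC : IsCompact C)
    (hne : C.Nonempty) (hν : ν Cᶜ = 0) : Icc 0 1 ⊆ cdf ν '' C := by
  have hinf := hC.sInf_mem hne
  have hsup := hC.sSup_mem hne
  have h0 : cdf ν (sInf C) = 0 := by
    rw [cdf_eq_real, ← measureReal_congr Iio_ae_eq_Iic, measureReal_eq_zero_iff]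
    exact measure_mono_null (fun s hs hsC => (csInf_le hC.bddBelow hsC).not_gt hs) hν
  have h1 : cdf ν (sSup C) = 1 := by
    have : ν.real (Iic (sSup C))ᶜ = 0 := by
      rw [measureReal_eq_zero_iff]
      exact measure_mono_null (fun s hs hsC => hs (le_csSup hC.bddAbove hsC)) hν
    rw [measureReal_compl measurableSet_Iic, probReal_univ] at this
    rw [cdf_eq_real]
    linarith
  intro s hs
  obtain ⟨t, ht, rfl⟩ := intermediate_value_Icc (csInf_le hC.bddBelow hsup)
    (continuous_cdf ν).continuousOn (by rwa [h0, h1])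
  exact exists_mem_cdf_eq ν hC hν ⟨_, hinf, ht.1⟩

end CDF

section MeasureOnCircle

variable (μ : Measure UnitAddCircle) {X : Set UnitAddCircle}

instance nullSingletonClass_map_rep [NullSingletonClass μ] : NullSingletonClass (μ.map rep) := by
  refine ⟨fun t => ?_⟩
  rw [Measure.map_apply measurable_rep (measurableSet_singleton t)]
  refine measure_mono_null (fun z (hz : rep z = t) => ?_) (measure_singleton (t : UnitAddCircle))
  rw [mem_singleton_iff, ← hz, coe_rep]

lemma measureReal_preimage_rep {s : Set ℝ} (hs : MeasurableSet s) :
    μ.real (rep ⁻¹' s) = (μ.map rep).real s :=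
  (map_measureReal_apply measurable_rep hs).symm

variable [IsProbabilityMeasure μ]

instance isProbabilityMeasure_map_rep : IsProbabilityMeasure (μ.map rep) :=
  Measure.isProbabilityMeasure_map measurable_rep.aemeasurable

theorem coe_measureReal_arcPos_le [NullSingletonClass μ] (b x : UnitAddCircle) :
    ((μ.real {w | arcPos b w ≤ arcPos b x} : ℝ) : UnitAddCircle) =
      ((cdf (μ.map rep) (rep x) - cdf (μ.map rep) (rep b) : ℝ) : UnitAddCircle) := by
  obtain ⟨hb0, hb1⟩ := rep_mem_Ico b
  obtain ⟨hx0, hx1⟩ := rep_mem_Ico x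
  simp only [cdf_eq_real]
  by_cases h : rep b ≤ rep x
  · have hset : {w | arcPos b w ≤ arcPos b x} = rep ⁻¹' Icc (rep b) (rep x) := by
      ext w
      obtain ⟨hw0, hw1⟩ := rep_mem_Ico w
      simp only [mem_ofPred_eq, mem_preimage, mem_Icc, arcPos, if_pos h]
      split_ifs with hw
      · exact ⟨fun h' => ⟨hw, h'⟩, And.right⟩
      · exact ⟨fun h' => by linarith, fun h' => absurd h'.1 hw⟩
    rw [hset, measureReal_preimage_rep μ measurableSet_Icc, ← measureReal_congr Ioc_ae_eq_Icc,
      ← Iic_sdiff_Iic, measureReal_sdiff (Iic_subset_Iic.2 h) measurableSet_Iic]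
  · have hset : {w | arcPos b w ≤ arcPos b x} = rep ⁻¹' (Iic (rep x) ∪ Ici (rep b)) := by
      ext w
      obtain ⟨hw0, hw1⟩ := rep_mem_Ico w
      simp only [mem_ofPred_eq, mem_preimage, mem_union, mem_Iic, mem_Ici, arcPos, if_neg h]
      split_ifs with hw
      · exact ⟨fun _ => Or.inr hw, fun _ => by linarith⟩
      · exact ⟨fun h' => Or.inl (by linarith), fun h' => h'.elim (by intro; linarith) (absurd · hw)⟩
    rw [hset, measureReal_preimage_rep μ (measurableSet_Iic.union measurableSet_Ici),
      measureReal_union (Iic_disjoint_Ici.2 h) measurableSet_Ici, ← measureReal_congr Ioi_ae_eq_Ici,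
      ← compl_Iic, measureReal_compl measurableSet_Iic, probReal_univ, add_sub_left_comm,
      add_comm, AddCircle.coe_add_period]

variable {μ}

lemma toReal_measure_rep_mem_Icc (hsupp : μ Xᶜ = 0) {α : ℝ} (hα : ∀ x ∈ X, α ≤ rep x) (y : ℝ) :
    (μ {t | α ≤ rep t ∧ rep t ≤ y}).toReal = cdf (μ.map rep) y := by
  rw [cdf_eq_real, ← measureReal_preimage_rep μ measurableSet_Iic]
  refine measureReal_congr ?_
  filter_upwards [measure_eq_zero_iff_ae_notMem.1 hsupp] with w hw
  exact propext ⟨And.right, fun h => ⟨hα w (not_not.1 hw), h⟩⟩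

lemma continuousOn_cdf_rep [NullSingletonClass μ] (h0 : (0 : UnitAddCircle) ∉ X) :
    ContinuousOn (fun x => cdf (μ.map rep) (rep x)) X :=
  (continuous_cdf _).comp_continuousOn (continuousOn_rep h0)

theorem Icc_subset_image_cdf_rep [NullSingletonClass μ] (hXc : IsClosed X)
    (h0 : (0 : UnitAddCircle) ∉ X) (hne : X.Nonempty) (hsupp : μ Xᶜ = 0) :
    Icc 0 1 ⊆ (fun x => cdf (μ.map rep) (rep x)) '' X := by
  have hC : IsCompact (rep '' X) := hXc.isCompact.image_of_continuousOn (continuousOn_rep h0)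
  rw [← image_image]
  refine Icc_subset_image_cdf _ hC (hne.image rep) ?_
  rw [Measure.map_apply measurable_rep hC.isClosed.measurableSet.compl]
  exact measure_mono_null (fun x hx hxX => hx ⟨x, hxX, rfl⟩) hsupp

end MeasureOnCircle

theorem MeasureTheory.MeasurePreserving.measure_singleton_eq_zero {α : Type*} [MeasurableSpace α]
    [MeasurableSingletonClass α] {f : α → α} {μ : Measure α} [IsFiniteMeasure μ]
    (hf : MeasurePreserving f μ μ) {x : α} (hinj : Injective fun n => f^[n] x) : μ {x} = 0 := by
  by_contra h
  have hle : ∀ n, μ {x} ≤ μ {f^[n] x} := fun n =>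
    calc μ {x} ≤ μ (f^[n] ⁻¹' {f^[n] x}) := measure_mono fun y hy => by simp_all
      _ = μ {f^[n] x} :=
        (hf.iterate n).measure_preimage (measurableSet_singleton _).nullMeasurableSet
  have htop : μ (range fun n => f^[n] x) = ⊤ := by
    rw [← iUnion_singleton_eq_range, measure_iUnion
      (fun m n hmn => disjoint_singleton.2 (hinj.ne hmn)) fun _ => measurableSet_singleton _]
    exact top_le_iff.1 (ENNReal.tsum_const_eq_top_of_ne_zero (α := ℕ) h ▸ ENNReal.tsum_le_tsum hle)
  exact measure_ne_top μ _ htop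

theorem subset_closure_diff_of_measure_eq_zero {α : Type*} [TopologicalSpace α]
    [MeasurableSpace α] {μ : Measure α} {X N : Set α} (hX : X ⊆ μ.support) (hsupp : μ Xᶜ = 0)
    (hN : μ N = 0) : X ⊆ closure (X \ N) :=
  hX.trans <| Measure.support_subset_of_isClosed isClosed_closure <|
    Filter.mem_of_superset (Filter.inter_mem (mem_ae_iff.2 hsupp) (compl_mem_ae_iff.2 hN))
      subset_closure

section MinimalSets

variable {T : UnitAddCircle → UnitAddCircle} {X : Set UnitAddCircle}

theorem MinimalOn.not_isPeriodicPt (hmin : MinimalOn T X) (hinf : X.Infinite) {x : UnitAddCircle}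
    (hx : x ∈ X) {n : ℕ} (hn : 0 < n) : ¬IsPeriodicPt T n x := by
  intro hper
  have hfin : (range fun m => T^[m] x).Finite :=
    ((finite_Iio n).image fun m => T^[m] x).subset <| by
      rintro _ ⟨m, rfl⟩
      exact ⟨m % n, Nat.mod_lt m hn, hper.iterate_mod_apply m⟩
  exact hinf (hfin.subset fun y hy => hfin.isClosed.closure_eq ▸ hmin x hx y hy)

theorem MinimalOn.injective_orbit (hmin : MinimalOn T X) (hmaps : MapsTo T X X)
    (hinf : X.Infinite) {x : UnitAddCircle} (hx : x ∈ X) : Injective fun n => T^[n] x := by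
  have key : ∀ m n, m < n → T^[m] x ≠ T^[n] x := fun m n hmn h =>
    hmin.not_isPeriodicPt hinf (hmaps.iterate m hx) (Nat.sub_pos_of_lt hmn) <| by
      rw [IsPeriodicPt, IsFixedPt, ← iterate_add_apply, Nat.sub_add_cancel hmn.le, h]
  intro m n h
  by_contra hne
  rcases Nat.lt_or_gt_of_ne hne with hlt | hlt
  exacts [key m n hlt h, key n m hlt h.symm]

theorem MinimalOn.subset_image (hmin : MinimalOn T X) (hXc : IsClosed X) (hmaps : MapsTo T X X)
    (hT : Continuous T) (hne : X.Nonempty) : X ⊆ T '' X := by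
  obtain ⟨x₀, hx₀⟩ := hne
  intro y hy
  refine (hXc.isCompact.image hT).isClosed.closure_subset_iff.2 ?_ (hmin (T x₀) (hmaps hx₀) y hy)
  rintro _ ⟨n, rfl⟩
  exact ⟨T^[n] x₀, hmaps.iterate n hx₀, by rw [← iterate_succ_apply' T n x₀, iterate_succ_apply]⟩

theorem MinimalOn.finite_image_of_semiconj {G : Type*} [AddMonoid G] [TopologicalSpace G]
    [T1Space G] (hmin : MinimalOn T X) (hXc : IsClosed X) (hmaps : MapsTo T X X)
    {Ψ : UnitAddCircle → G} (hΨ : ContinuousOn Ψ X) {θ : G} (hθ : IsOfFinAddOrder θ)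
    (hsemi : ∀ x ∈ X, Ψ (T x) = Ψ x + θ) {x₀ : UnitAddCircle} (hx₀ : x₀ ∈ X) :
    (Ψ '' X).Finite := by
  set K := (Ψ x₀ + ·) '' (AddSubmonoid.multiples θ : Set G)
  have hK : K.Finite := hθ.finite_multiples.image _
  have horbit : ∀ n : ℕ, Ψ (T^[n] x₀) = Ψ x₀ + n • θ := by
    intro n
    induction n with
    | zero => simp
    | succ n ih =>
      rw [iterate_succ_apply', hsemi _ (hmaps.iterate n hx₀), ih, succ_nsmul, add_assoc]
  have hE : IsClosed (X ∩ Ψ ⁻¹' K) := hΨ.preimage_isClosed_of_isClosed hXc hK.isClosed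
  refine hK.subset ?_
  rintro _ ⟨x, hx, rfl⟩
  refine (hE.closure_subset_iff.2 ?_ (hmin x₀ hx₀ x hx)).2
  rintro _ ⟨n, rfl⟩
  exact ⟨hmaps.iterate n hx₀, n • θ, ⟨n, rfl⟩, (horbit n).symm⟩

theorem MinimalOn.irrational_of_semiconj (hmin : MinimalOn T X) (hXc : IsClosed X)
    (hmaps : MapsTo T X X) {Φ : UnitAddCircle → ℝ} (hΦ : ContinuousOn Φ X)
    (hsurj : Ico 0 1 ⊆ Φ '' X) {θ : ℝ}
    (hsemi : ∀ x ∈ X, (Φ (T x) : UnitAddCircle) = (Φ x + θ : ℝ)) : Irrational θ := by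
  rintro ⟨q, hq⟩
  obtain ⟨x₀, hx₀, -⟩ := hsurj ⟨le_rfl, zero_lt_one⟩
  have hfin := hmin.finite_image_of_semiconj hXc hmaps
    ((AddCircle.continuous_mk' 1).comp_continuousOn hΦ)
    (AddCircle.isOfFinAddOrder_iff_exists_rat_eq_div.2 ⟨q, by rw [hq, div_one]⟩) hsemi hx₀
  have hinj : InjOn ((↑) : ℝ → UnitAddCircle) (Ico 0 1) := fun r hr s hs h => by
    rw [← rep_coe hr, ← rep_coe hs, h]
  refine ((Ico_infinite (zero_lt_one' ℝ)).image hinj).mono ?_ hfin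
  rintro _ ⟨r, hr, rfl⟩
  obtain ⟨x, hx, rfl⟩ := hsurj hr
  exact ⟨x, hx, rfl⟩

variable {μ : Measure UnitAddCircle}

theorem MinimalOn.nullSingletonClass (hmin : MinimalOn T X) (hmaps : MapsTo T X X)
    (hinf : X.Infinite) [IsFiniteMeasure μ] (hμ : MeasurePreserving T μ μ) (hsupp : μ Xᶜ = 0) :
    NullSingletonClass μ := by
  refine ⟨fun x => ?_⟩
  by_cases hx : x ∈ X
  · exact hμ.measure_singleton_eq_zero (hmin.injective_orbit hmaps hinf hx)
  · exact measure_mono_null (singleton_subset_iff.2 hx) hsupp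

theorem MinimalOn.subset_support (hmin : MinimalOn T X) (hμ : MeasurePreserving T μ μ)
    (hX : μ X ≠ 0) : X ⊆ μ.support := by
  intro x hx
  rw [(nhds_basis_opens x).mem_measureSupport]
  rintro U ⟨hxU, hU⟩
  refine pos_iff_ne_zero.2 fun hU0 => hX (measure_mono_null (t := ⋃ n, T^[n] ⁻¹' U) ?_ ?_)
  · intro y hy
    obtain ⟨_, hzU, n, rfl⟩ := mem_closure_iff.1 (hmin y hy x hx) U hU hxU
    exact mem_iUnion.2 ⟨n, hzU⟩
  · exact measure_iUnion_null fun n =>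
      ((hμ.iterate n).measure_preimage hU.measurableSet.nullMeasurableSet).trans hU0

end MinimalSets

section Semiconjugacy

variable {T : UnitAddCircle → UnitAddCircle} {X : Set UnitAddCircle} {μ : Measure UnitAddCircle}
  [IsProbabilityMeasure μ] [NullSingletonClass μ] {a b : UnitAddCircle}

theorem PreservesCyclicOrder.coe_cdf_rep_apply_of_ne (hcyc : PreservesCyclicOrder T X)
    (hmaps : MapsTo T X X) (hμ : MeasurePreserving T μ μ) (hsupp : μ Xᶜ = 0)
    (hleft : ∀ x ∈ X, rep a ≤ rep x) (hb : b ∈ X) (hTb : T b = a)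
    {x : UnitAddCircle} (hx : x ∈ X) (hxa : T x ≠ a) :
    ((cdf (μ.map rep) (rep (T x)) : ℝ) : UnitAddCircle) =
      ((cdf (μ.map rep) (rep x) - cdf (μ.map rep) (rep b) : ℝ) : UnitAddCircle) := by
  have hne : ∀ y, ∀ᵐ w ∂μ, T w ≠ y := fun y => measure_eq_zero_iff_ae_notMem.1 <|
    (hμ.measure_preimage (measurableSet_singleton y).nullMeasurableSet).trans (measure_singleton y)
  have hae : T ⁻¹' (rep ⁻¹' Iic (rep (T x))) =ᵐ[μ] {w | arcPos b w ≤ arcPos b x} := by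
    filter_upwards [measure_eq_zero_iff_ae_notMem.1 hsupp, hne a, hne (T x)] with w hwX hwa hwx
    exact propext (hcyc.rep_le_rep_iff_arcPos_le hmaps hleft hb hTb (not_not.1 hwX) hx hwa hxa hwx)
  rw [cdf_eq_real, ← measureReal_preimage_rep μ measurableSet_Iic,
    ← hμ.measureReal_preimage (measurable_rep measurableSet_Iic).nullMeasurableSet,
    measureReal_congr hae, coe_measureReal_arcPos_le]

theorem IsRotational.coe_cdf_rep_apply (hrot : IsRotational T X) (hT : Continuous T)
    (h0 : (0 : UnitAddCircle) ∉ X) (hμ : MeasurePreserving T μ μ) (hsupp : μ Xᶜ = 0)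
    (hleft : ∀ x ∈ X, rep a ≤ rep x) (hb : b ∈ X) (hTb : T b = a) :
    ∀ x ∈ X, ((cdf (μ.map rep) (rep (T x)) : ℝ) : UnitAddCircle) =
      ((cdf (μ.map rep) (rep x) - cdf (μ.map rep) (rep b) : ℝ) : UnitAddCircle) := by
  obtain ⟨hXc, hmaps, hmin, hcyc⟩ := hrot
  have hF := continuousOn_cdf_rep (μ := μ) h0
  have hcoe := AddCircle.continuous_mk' (1 : ℝ)
  have hX : μ X ≠ 0 := by
    rw [(prob_compl_eq_zero_iff hXc.measurableSet).1 hsupp]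
    exact one_ne_zero
  refine EqOn.of_subset_closure (s := X \ T ⁻¹' {a})
    (fun x hx => hcyc.coe_cdf_rep_apply_of_ne hmaps hμ hsupp hleft hb hTb hx.1 hx.2)
    (hcoe.comp_continuousOn (hF.comp hT.continuousOn hmaps))
    (hcoe.comp_continuousOn (hF.sub continuousOn_const)) sdiff_subset
    (subset_closure_diff_of_measure_eq_zero (hmin.subset_support hμ hX) hsupp ?_)
  exact (hμ.measure_preimage (measurableSet_singleton a).nullMeasurableSet).trans
    (measure_singleton a)

end Semiconjugacy

theorem semiconjugacy_to_rotation_general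
    (T : UnitAddCircle → UnitAddCircle) (hT : Continuous T)
    (X : Set UnitAddCircle) (hrot : IsRotational T X)
    (hinf : X.Infinite)
    (h0 : (0 : UnitAddCircle) ∉ X)
    (Xr : Set ℝ)
    (hXr : Xr = {r : ℝ | r ∈ Set.Ico (0:ℝ) 1 ∧ ((r : ℝ) : UnitAddCircle) ∈ X})
    (α : ℝ) (hα : α = sInf Xr)
    (μ : Measure UnitAddCircle) [IsProbabilityMeasure μ]
    (hμinv : ∀ s : Set UnitAddCircle, MeasurableSet s → μ (T ⁻¹' s) = μ s)
    (hsupp : μ Xᶜ = 0)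
    (Φ : UnitAddCircle → ℝ)
    (hΦ : ∀ x : UnitAddCircle,
      Φ x = (μ {t : UnitAddCircle | α ≤ rep t ∧ rep t ≤ rep x}).toReal) :
    ∃ θ₀ : ℝ, Irrational θ₀ ∧ θ₀ ∈ Set.Ioo (0:ℝ) 1 ∧
      ∀ x ∈ X, ((Φ (T x) : ℝ) : UnitAddCircle) = ((Φ x + θ₀ : ℝ) : UnitAddCircle) := by
  have ⟨hXc, hmaps, hmin, _⟩ := hrot
  have hμ : MeasurePreserving T μ μ := ⟨hT.measurable, Measure.ext fun s hs => by
    rw [Measure.map_apply hT.measurable hs, hμinv s hs]⟩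
  have := hmin.nullSingletonClass hmaps hinf hμ hsupp
  rw [setOf_coe_mem_eq_image_rep] at hXr
  subst hXr
  have hC : IsCompact (rep '' X) := hXc.isCompact.image_of_continuousOn (continuousOn_rep h0)
  have hleft : ∀ x ∈ X, α ≤ rep x := fun x hx => hα ▸ csInf_le hC.bddBelow ⟨x, hx, rfl⟩
  obtain ⟨a, haX, rfl⟩ : α ∈ rep '' X := hα ▸ hC.sInf_mem (hinf.nonempty.image rep)
  obtain ⟨b, hbX, hTb⟩ := hmin.subset_image hXc hmaps hT hinf.nonempty haX
  obtain rfl : Φ = fun x => cdf (μ.map rep) (rep x) :=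
    funext fun x => (hΦ x).trans (toReal_measure_rep_mem_Icc hsupp hleft (rep x))
  set θ := 1 - cdf (μ.map rep) (rep b)
  have hsemi : ∀ x ∈ X, ((cdf (μ.map rep) (rep (T x)) : ℝ) : UnitAddCircle) =
      ((cdf (μ.map rep) (rep x) + θ : ℝ) : UnitAddCircle) := fun x hx => by
    rw [hrot.coe_cdf_rep_apply hT h0 hμ hsupp hleft hbX hTb x hx, add_sub_left_comm,
      add_comm, AddCircle.coe_add_period]
  have hirr : Irrational θ := hmin.irrational_of_semiconj hXc hmaps (continuousOn_cdf_rep h0)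
    (Ico_subset_Icc_self.trans (Icc_subset_image_cdf_rep hXc h0 hinf.nonempty hsupp)) hsemi
  refine ⟨θ, hirr, ⟨lt_of_le_of_ne ?_ hirr.ne_zero.symm, lt_of_le_of_ne ?_ hirr.ne_one⟩, hsemi⟩
  · linarith [cdf_le_one (μ.map rep) (rep b)]
  · linarith [cdf_nonneg (μ.map rep) (rep b)]

theorem semiconjugacy_to_rotation
    (T : UnitAddCircle → UnitAddCircle) (hT : Continuous T)
    (hfib : ∀ y : UnitAddCircle, (T ⁻¹' {y}).Finite)
    (X : Set UnitAddCircle) (hrot : IsRotational T X)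
    (hinf : X.Infinite) (hproper : X ≠ Set.univ)
    (h0 : (0 : UnitAddCircle) ∉ X)
    (Xr : Set ℝ)
    (hXr : Xr = {r : ℝ | r ∈ Set.Ico (0:ℝ) 1 ∧ ((r : ℝ) : UnitAddCircle) ∈ X})
    (α β : ℝ) (hα : α = sInf Xr) (hβ : β = sSup Xr)
    (μ : Measure UnitAddCircle) [IsProbabilityMeasure μ]
    (hμinv : ∀ s : Set UnitAddCircle, MeasurableSet s → μ (T ⁻¹' s) = μ s)
    (hsupp : μ Xᶜ = 0)
    (Φ : UnitAddCircle → ℝ)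
    (hΦ : ∀ x : UnitAddCircle,
      Φ x = (μ {t : UnitAddCircle | α ≤ rep t ∧ rep t ≤ rep x}).toReal) :
    ∃ θ₀ : ℝ, Irrational θ₀ ∧ θ₀ ∈ Set.Ioo (0:ℝ) 1 ∧
      ∀ x ∈ X, ((Φ (T x) : ℝ) : UnitAddCircle) = ((Φ x + θ₀ : ℝ) : UnitAddCircle) :=
  semiconjugacy_to_rotation_general T hT X hrot hinf h0 Xr hXr α hα μ hμinv hsupp Φ hΦ
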